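/- For all t > 0, x > 0, and λ ≥ 0, with p₂(t,x,y) = (1/√(2π t x)) e^{−(x+y)/(2t)} cosh(√(xy)/t), one has ∫_0^∞ y^{−1/2} e^{−λ y} p₂(t,x,y) dy = (1/√(x(1+2λt))) exp( −λx/(1+2λt) ). -/

import Mathlib

open Real MeasureTheory Set

/-!
Substituting `y = u ^ 2` turns `y ^ (-1/2) dy` into `2 du` and `√(x y)` into `√x u`, so the transform
becomes a multiple of `∫₀^∞ exp (-a u²) cosh (b u) du` with `a = λ + 1/(2t)` and `b = √x / t`. The
integrand is even, so this is half the integral over `ℝ`, which completing the square evaluates to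
`√(π / a) exp (b² / (4a))`.
-/

lemma exp_neg_mul_sq_add_mul {a : ℝ} (ha : a ≠ 0) (b u : ℝ) :
    exp (-a * u ^ 2 + b * u) = exp (b ^ 2 / (4 * a)) * exp (-a * (u - b / (2 * a)) ^ 2) := by
  rw [← exp_add]
  congr 1
  field_simp
  ring

lemma integrable_exp_neg_mul_sq_add_mul {a : ℝ} (ha : 0 < a) (b : ℝ) :
    Integrable fun u : ℝ => exp (-a * u ^ 2 + b * u) := by
  simp_rw [exp_neg_mul_sq_add_mul ha.ne']
  exact ((integrable_exp_neg_mul_sq ha).comp_sub_right _).const_mul _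

lemma integral_exp_neg_mul_sq_add_mul {a : ℝ} (ha : a ≠ 0) (b : ℝ) :
    ∫ u : ℝ, exp (-a * u ^ 2 + b * u) = √(π / a) * exp (b ^ 2 / (4 * a)) := by
  simp_rw [exp_neg_mul_sq_add_mul ha, integral_const_mul,
    integral_sub_right_eq_self (fun u => exp (-a * u ^ 2)), integral_gaussian, mul_comm]

lemma integral_exp_neg_mul_sq_mul_cosh {a : ℝ} (ha : 0 < a) (b : ℝ) :
    ∫ u : ℝ, exp (-a * u ^ 2) * cosh (b * u) = √(π / a) * exp (b ^ 2 / (4 * a)) := by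
  have hsplit : ∀ u : ℝ, exp (-a * u ^ 2) * cosh (b * u)
      = (exp (-a * u ^ 2 + b * u) + exp (-a * u ^ 2 + -b * u)) / 2 := by
    intro u
    rw [cosh_eq, exp_add, exp_add, neg_mul b]
    ring
  simp_rw [hsplit]
  rw [integral_div, integral_add (integrable_exp_neg_mul_sq_add_mul ha b)
    (integrable_exp_neg_mul_sq_add_mul ha (-b)), integral_exp_neg_mul_sq_add_mul ha.ne',
    integral_exp_neg_mul_sq_add_mul ha.ne', neg_sq]
  ring

lemma integral_Ioi_exp_neg_mul_sq_mul_cosh {a : ℝ} (ha : 0 < a) (b : ℝ) :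
    ∫ u in Ioi (0 : ℝ), exp (-a * u ^ 2) * cosh (b * u)
      = √(π / a) * exp (b ^ 2 / (4 * a)) / 2 := by
  have heven : ∀ u : ℝ, exp (-a * |u| ^ 2) * cosh (b * |u|) = exp (-a * u ^ 2) * cosh (b * u) := by
    intro u
    rcases abs_choice u with h | h <;> simp [h, mul_neg, cosh_neg]
  have hfold := integral_comp_abs (f := fun u => exp (-a * u ^ 2) * cosh (b * u))
  simp only [heven] at hfold
  rw [← integral_exp_neg_mul_sq_mul_cosh ha, hfold]
  ring

lemma integral_Ioi_rpow_neg_half_smul {E : Type*} [NormedAddCommGroup E] [NormedSpace ℝ E]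
    (g : ℝ → E) :
    ∫ y in Ioi (0 : ℝ), y ^ (-(1 : ℝ) / 2) • g y = (2 : ℝ) • ∫ u in Ioi (0 : ℝ), g (u ^ 2) := by
  rw [← integral_comp_rpow_Ioi_of_pos two_pos, ← integral_smul]
  refine setIntegral_congr_fun measurableSet_Ioi fun u (hu : 0 < u) => ?_
  have hroot : (u ^ (2 : ℝ)) ^ (-(1 : ℝ) / 2) = u⁻¹ := by
    rw [← rpow_mul hu.le]
    norm_num [rpow_neg_one]
  rw [hroot, smul_smul, rpow_two]
  norm_num [hu.ne']

lemma exp_mul_kernel_sq (t x lam u : ℝ) (hx : 0 ≤ x) (hu : 0 ≤ u) :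
    exp (-lam * u ^ 2) * (1 / √(2 * π * t * x) * exp (-(x + u ^ 2) / (2 * t))
        * cosh (√(x * u ^ 2) / t))
      = 1 / √(2 * π * t * x) * exp (-x / (2 * t))
        * (exp (-(lam + 1 / (2 * t)) * u ^ 2) * cosh (√x / t * u)) := by
  have hexp : exp (-lam * u ^ 2) * exp (-(x + u ^ 2) / (2 * t))
      = exp (-x / (2 * t)) * exp (-(lam + 1 / (2 * t)) * u ^ 2) := by
    rw [← exp_add, ← exp_add]
    congr 1
    ring
  rw [sqrt_mul hx, sqrt_sq hu, mul_div_right_comm]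
  linear_combination (1 / √(2 * π * t * x) * cosh (√x / t * u)) * hexp

theorem stmt_4 (t x lam : ℝ) (ht : 0 < t) (hx : 0 < x) (hlam : 0 ≤ lam)
    (p₂ : ℝ → ℝ)
    (hp₂ : ∀ y, p₂ y = (1 / Real.sqrt (2 * π * t * x)) * Real.exp (-(x + y) / (2 * t))
        * Real.cosh (Real.sqrt (x * y) / t)) :
    (∫ y in Set.Ioi (0 : ℝ), y ^ (-(1 : ℝ) / 2) * Real.exp (-lam * y) * p₂ y)
      = (1 / Real.sqrt (x * (1 + 2 * lam * t)))
        * Real.exp (-lam * x / (1 + 2 * lam * t)) := by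
  set a := lam + 1 / (2 * t) with ha_def
  have ha : 0 < a := by positivity
  have hroot : √(π / a) / √(2 * π * t * x) = 1 / √(x * (1 + 2 * lam * t)) := by
    rw [← sqrt_div' _ (by positivity), one_div, ← sqrt_inv]
    congr 1
    rw [ha_def]
    field_simp
    ring
  have hexp : exp (-x / (2 * t)) * exp ((√x / t) ^ 2 / (4 * a))
      = exp (-lam * x / (1 + 2 * lam * t)) := by
    rw [← exp_add, div_pow, sq_sqrt hx.le]
    congr 1
    rw [ha_def]
    field_simp
    ring
  calc ∫ y in Ioi (0 : ℝ), y ^ (-(1 : ℝ) / 2) * exp (-lam * y) * p₂ y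
      = (2 : ℝ) • ∫ u in Ioi (0 : ℝ), exp (-lam * u ^ 2) * p₂ (u ^ 2) := by
        simp_rw [mul_assoc, ← smul_eq_mul (a := _ ^ _)]
        exact integral_Ioi_rpow_neg_half_smul _
    _ = (2 : ℝ) • ∫ u in Ioi (0 : ℝ), 1 / √(2 * π * t * x) * exp (-x / (2 * t))
          * (exp (-a * u ^ 2) * cosh (√x / t * u)) := by
        refine congrArg _ (setIntegral_congr_fun measurableSet_Ioi fun u (hu : 0 < u) => ?_)
        rw [hp₂, exp_mul_kernel_sq t x lam u hx.le hu.le]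
    _ = 2 * (1 / √(2 * π * t * x) * exp (-x / (2 * t))
          * (√(π / a) * exp ((√x / t) ^ 2 / (4 * a)) / 2)) := by
        rw [integral_const_mul, integral_Ioi_exp_neg_mul_sq_mul_cosh ha, smul_eq_mul]
    _ = 1 / √(x * (1 + 2 * lam * t)) * exp (-lam * x / (1 + 2 * lam * t)) := by
        rw [← hroot, ← hexp]
        ring
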